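/- Define V(σ,t) = α(μ - (1/√t) ∫_{√t Δq/σ}^∞ (σx - √t Δq) φ(x) dx) for σ > 0, t > 0, with φ the standard normal density and α, Δq > 0. Then ∂V/∂σ (σ,t) = -(α/√t) ∫_{√t Δq/σ}^∞ x φ(x) dx < 0. -/

import Mathlib

open MeasureTheory Real

noncomputable def phi (x : ℝ) : ℝ := Real.exp (-x ^ 2 / 2) / Real.sqrt (2 * Real.pi)

noncomputable def Val (α μ Δq σ t : ℝ) : ℝ :=
  α * (μ - (1 / Real.sqrt t) *
    ∫ x in Set.Ioi (Real.sqrt t * Δq / σ), (σ * x - Real.sqrt t * Δq) * phi x)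

/-!
Differentiating under the integral sign, the contribution of the moving lower limit
`x = √t Δq / σ` vanishes because the integrand `σ x - √t Δq` is zero there, so only
`∫ x φ(x) dx` survives. Since `φ' = -x φ`, this tail integral equals `φ(√t Δq / σ) > 0`.
-/

open Set Filter Topology

theorem hasDerivAt_integral_Ioi {f : ℝ → ℝ} {a : ℝ} (hf : Integrable f)
    (hfa : ContinuousAt f a) :
    HasDerivAt (fun b => ∫ x in Ioi b, f x) (-f a) a := by
  have hsplit : (fun b => ∫ x in Ioi b, f x) =
      fun b => (∫ x in Ioi 0, f x) - ∫ x in (0 : ℝ)..b, f x := by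
    funext b
    rw [← intervalIntegral.integral_Ioi_sub_Ioi' hf.integrableOn hf.integrableOn, sub_sub_cancel]
  rw [hsplit]
  exact (intervalIntegral.integral_hasDerivAt_right hf.intervalIntegrable
    (hf.aestronglyMeasurable.stronglyMeasurableAtFilter) hfa).const_sub _

theorem hasDerivAt_integral_Ioi_div_mul_sub {g : ℝ → ℝ} {c σ : ℝ} (hg : Integrable g)
    (hxg : Integrable fun x => x * g x) (hgc : ContinuousAt g (c / σ)) (hσ : σ ≠ 0) :
    HasDerivAt (fun s => ∫ x in Ioi (c / s), (s * x - c) * g x)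
      (∫ x in Ioi (c / σ), x * g x) σ := by
  have hsplit : (fun s => ∫ x in Ioi (c / s), (s * x - c) * g x) = fun s =>
      s * (∫ x in Ioi (c / s), x * g x) - c * ∫ x in Ioi (c / s), g x := by
    funext s
    simp_rw [sub_mul, mul_assoc]
    rw [integral_sub (hxg.const_mul s).integrableOn (hg.const_mul c).integrableOn,
      integral_const_mul, integral_const_mul]
  have hdiv : HasDerivAt (fun s => c / s) (-(c / σ ^ 2)) σ := by
    simpa [div_eq_mul_inv] using (hasDerivAt_inv hσ).const_mul c
  have hmoment := (hasDerivAt_integral_Ioi hxg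
    (continuousAt_id.mul hgc)).comp σ hdiv
  have hmass := (hasDerivAt_integral_Ioi hg hgc).comp σ hdiv
  rw [hsplit]
  refine (((hasDerivAt_id σ).mul hmoment).sub (hmass.const_mul c)).congr_deriv ?_
  simp only [Function.comp, id]
  -- the boundary terms `σ · (c/σ) g(c/σ) · c/σ²` and `c · g(c/σ) · c/σ²` cancel
  field_simp
  ring

theorem phi_pos (x : ℝ) : 0 < phi x := by
  unfold phi
  positivity

theorem continuous_phi : Continuous phi := by
  unfold phi
  fun_prop

theorem phi_eq_mul_exp (x : ℝ) : phi x = (√(2 * π))⁻¹ * exp (-(1 / 2) * x ^ 2) := by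
  rw [phi, div_eq_inv_mul]
  ring_nf

theorem integrable_phi : Integrable phi := by
  simp_rw [funext phi_eq_mul_exp]
  exact (integrable_exp_neg_mul_sq (by norm_num)).const_mul _

theorem integrable_mul_phi : Integrable fun x => x * phi x := by
  simp_rw [phi_eq_mul_exp, mul_left_comm _ (√(2 * π))⁻¹]
  exact (integrable_mul_exp_neg_mul_sq (by norm_num)).const_mul _

theorem hasDerivAt_phi (x : ℝ) : HasDerivAt phi (-x * phi x) x := by
  have hexp : HasDerivAt (fun y => -y ^ 2 / 2) (-x) x :=
    ((hasDerivAt_pow 2 x).neg.div_const 2).congr_deriv (by ring)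
  exact (hexp.exp.div_const (√(2 * π))).congr_deriv (by simp only [phi]; ring)

theorem tendsto_phi_atTop : Tendsto phi atTop (𝓝 0) := by
  have hsq : Tendsto (fun x : ℝ => -x ^ 2 / 2) atTop atBot :=
    (tendsto_neg_atBot_iff.2 (tendsto_pow_atTop two_ne_zero)).atBot_div_const two_pos
  exact zero_div (√(2 * π)) ▸ (tendsto_exp_atBot.comp hsq).div_const (√(2 * π))

theorem integral_Ioi_mul_phi (a : ℝ) : ∫ x in Ioi a, x * phi x = phi a := by
  have := integral_Ioi_of_hasDerivAt_of_tendsto' (a := a) (f := fun x => -phi x)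
    (fun x _ => (hasDerivAt_phi x).neg.congr_deriv (by ring)) integrable_mul_phi.integrableOn
    (neg_zero (G := ℝ) ▸ tendsto_phi_atTop.neg)
  rw [this, sub_neg_eq_add, zero_add]

theorem stmt_17_general (α μ Δq σ t : ℝ) (hα : 0 < α)
    (hσ : 0 < σ) (ht : 0 < t) :
    HasDerivAt (fun s => Val α μ Δq s t)
      (-(α / Real.sqrt t) * ∫ x in Set.Ioi (Real.sqrt t * Δq / σ), x * phi x) σ ∧
    -(α / Real.sqrt t) * (∫ x in Set.Ioi (Real.sqrt t * Δq / σ), x * phi x) < 0 := by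
  constructor
  · have hVal := ((hasDerivAt_integral_Ioi_div_mul_sub (c := √t * Δq) integrable_phi integrable_mul_phi
      continuous_phi.continuousAt hσ.ne').const_mul (1 / √t)).const_sub μ |>.const_mul α
    exact hVal.congr_deriv (by ring)
  · rw [integral_Ioi_mul_phi, neg_mul, neg_lt_zero]
    exact mul_pos (div_pos hα (sqrt_pos.2 ht)) (phi_pos _)

theorem stmt_17 (α μ Δq σ t : ℝ) (hα : 0 < α) (hΔq : 0 < Δq)
    (hσ : 0 < σ) (ht : 0 < t) :
    HasDerivAt (fun s => Val α μ Δq s t)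
      (-(α / Real.sqrt t) * ∫ x in Set.Ioi (Real.sqrt t * Δq / σ), x * phi x) σ ∧
    -(α / Real.sqrt t) * (∫ x in Set.Ioi (Real.sqrt t * Δq / σ), x * phi x) < 0 :=
  stmt_17_general α μ Δq σ t hα hσ ht
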